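/- arXiv:2111.08996 — 5 statements merged into one kernel-verified Lean document; each statement's English description precedes it below -/
import Mathlib

section
/- Let n ≥ 1 be an integer and R = C[x,y,z,t]/(xz − y(y+t^n)). Then there is a C-algebra isomorphism between the localization of R at the multiplicative set generated by (the images of) y and t, and the localization of the polynomial ring C[x,w,t] at the multiplicative set generated by t and xw − t^n, given by x ↦ x, t ↦ t, y ↦ xw − t^n, z ↦ w(xw − t^n), whose inverse sends w to z/y. -/
open MvPolynomial

/-- The coordinate ring `R = C[x,y,z,t]/(xz − y(y+t^n))`, with `x, y, z, t`
the variables `X 0, X 1, X 2, X 3`. -/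
noncomputable abbrev flopBase (n : ℕ) : Type :=
  MvPolynomial (Fin 4) ℂ ⧸
    Ideal.span {(X 0 * X 2 - X 1 ^ 2 - X 1 * X 3 ^ n : MvPolynomial (Fin 4) ℂ)}

/-- The multiplicative set of `R` generated by (the classes of) `y` and `t`. -/
noncomputable def flopSubmonoid (n : ℕ) : Submonoid (flopBase n) :=
  Submonoid.closure {Ideal.Quotient.mk _ (X 1), Ideal.Quotient.mk _ (X 3)}

/-- The multiplicative set of the polynomial ring `C[x,w,t]` (variables
`x, w, t` being `X 0, X 1, X 2`) generated by `t` and `xw − t^n`. -/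
noncomputable def polySubmonoid (n : ℕ) : Submonoid (MvPolynomial (Fin 3) ℂ) :=
  Submonoid.closure {X 2, X 0 * X 1 - X 2 ^ n}

/-!
Substituting `y = xw − t^n`, `z = w(xw − t^n)` kills `xz − y(y + t^n)` and turns `y` and `t`
into units of `C[x,w,t][t⁻¹, (xw − t^n)⁻¹]`. Conversely, `w ↦ z/y` makes sense after inverting
`y`, and there the relation `xz = y(y + t^n)` says exactly that `x(z/y) − t^n = y`, a unit. The
two maps of localizations so obtained are mutually inverse because they are so on generators.
-/

theorem Submonoid.isUnit_map_of_mem_closure {M N F : Type*} [Monoid M] [Monoid N] [FunLike F M N]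
    [MonoidHomClass F M N] (f : F) {s : Set M} (hs : ∀ x ∈ s, IsUnit (f x)) {x : M}
    (hx : x ∈ Submonoid.closure s) : IsUnit (f x) :=
  (Submonoid.closure_le (S := (IsUnit.submonoid N).comap f)).2 hs hx

namespace Flop

variable (n : ℕ)

local notation "𝓛" => Localization (flopSubmonoid n)
local notation "𝓜" => Localization (polySubmonoid n)

theorem y_mem_flopSubmonoid : (Ideal.Quotient.mk _ (X 1) : flopBase n) ∈ flopSubmonoid n :=
  Submonoid.subset_closure (Set.mem_insert _ _)

theorem t_mem_flopSubmonoid : (Ideal.Quotient.mk _ (X 3) : flopBase n) ∈ flopSubmonoid n :=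
  Submonoid.subset_closure (Set.mem_insert_of_mem _ rfl)

theorem t_mem_polySubmonoid : (X 2 : MvPolynomial (Fin 3) ℂ) ∈ polySubmonoid n :=
  Submonoid.subset_closure (Set.mem_insert _ _)

theorem xw_sub_mem_polySubmonoid :
    (X 0 * X 1 - X 2 ^ n : MvPolynomial (Fin 3) ℂ) ∈ polySubmonoid n :=
  Submonoid.subset_closure (Set.mem_insert_of_mem _ rfl)

noncomputable def flopToPoly : flopBase n →ₐ[ℂ] MvPolynomial (Fin 3) ℂ :=
  Ideal.Quotient.liftₐ _ (aeval ![X 0, X 0 * X 1 - X 2 ^ n, X 1 * (X 0 * X 1 - X 2 ^ n), X 2]) <| by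
    intro a ha
    obtain ⟨c, rfl⟩ := Ideal.mem_span_singleton'.1 ha
    rw [map_mul]
    apply mul_eq_zero_of_right
    simp only [map_sub, map_mul, map_pow, aeval_X, Matrix.cons_val]
    ring

@[simp] theorem flopToPoly_mk (p : MvPolynomial (Fin 4) ℂ) :
    flopToPoly n (Ideal.Quotient.mk _ p) =
      aeval ![X 0, X 0 * X 1 - X 2 ^ n, X 1 * (X 0 * X 1 - X 2 ^ n), X 2] p :=
  rfl

theorem isUnit_flopToPoly (s : flopSubmonoid n) :
    IsUnit (algebraMap _ 𝓜 (flopToPoly n s)) := by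
  refine Submonoid.isUnit_map_of_mem_closure ((algebraMap _ _).comp (flopToPoly n).toRingHom) ?_ s.2
  rintro _ (rfl | rfl)
  · simpa using IsLocalization.map_units 𝓜 ⟨_, xw_sub_mem_polySubmonoid n⟩
  · simpa using IsLocalization.map_units 𝓜 ⟨_, t_mem_polySubmonoid n⟩

noncomputable def toPolyLoc : 𝓛 →ₐ[ℂ] 𝓜 :=
  IsLocalization.liftAlgHom (M := flopSubmonoid n) (S := 𝓛)
    (f := (IsScalarTower.toAlgHom ℂ _ _).comp (flopToPoly n)) (isUnit_flopToPoly n)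

@[simp] theorem toPolyLoc_algebraMap (r : flopBase n) :
    toPolyLoc n (algebraMap _ 𝓛 r) =
      algebraMap _ 𝓜 (flopToPoly n r) :=
  IsLocalization.lift_eq _ _

theorem flopBase_relation :
    (Ideal.Quotient.mk _ (X 0) * Ideal.Quotient.mk _ (X 2) : flopBase n) =
      Ideal.Quotient.mk _ (X 1) * (Ideal.Quotient.mk _ (X 1) + Ideal.Quotient.mk _ (X 3) ^ n) := by
  simp only [← map_mul, ← map_add, ← map_pow]
  exact Ideal.Quotient.eq.2 (Ideal.mem_span_singleton.2 ⟨1, by ring⟩)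

noncomputable def polyToLoc : MvPolynomial (Fin 3) ℂ →ₐ[ℂ] 𝓛 :=
  aeval ![algebraMap (flopBase n) _ (Ideal.Quotient.mk _ (X 0)),
    Localization.mk (Ideal.Quotient.mk _ (X 2)) ⟨_, y_mem_flopSubmonoid n⟩,
    algebraMap (flopBase n) _ (Ideal.Quotient.mk _ (X 3))]

@[simp] theorem polyToLoc_X_zero :
    polyToLoc n (X 0) = algebraMap (flopBase n) 𝓛 (Ideal.Quotient.mk _ (X 0)) := by
  simp [polyToLoc]

@[simp] theorem polyToLoc_X_one :
    polyToLoc n (X 1) = Localization.mk (Ideal.Quotient.mk _ (X 2)) ⟨_, y_mem_flopSubmonoid n⟩ := by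
  simp [polyToLoc]

@[simp] theorem polyToLoc_X_two :
    polyToLoc n (X 2) = algebraMap (flopBase n) 𝓛 (Ideal.Quotient.mk _ (X 3)) := by
  simp [polyToLoc]

theorem polyToLoc_X_one_mul : polyToLoc n (X 1) *
    algebraMap (flopBase n) 𝓛 (Ideal.Quotient.mk _ (X 1)) =
      algebraMap (flopBase n) 𝓛 (Ideal.Quotient.mk _ (X 2)) := by
  rw [polyToLoc_X_one, Localization.mk_eq_mk']
  exact IsLocalization.mk'_spec _ _ _

theorem polyToLoc_xw_sub : polyToLoc n (X 0 * X 1 - X 2 ^ n) =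
    algebraMap (flopBase n) 𝓛 (Ideal.Quotient.mk _ (X 1)) := by
  refine (IsLocalization.map_units 𝓛 ⟨_, y_mem_flopSubmonoid n⟩).mul_right_cancel ?_
  have hrel := congrArg (algebraMap (flopBase n) 𝓛) (flopBase_relation n)
  simp only [map_mul, map_add, map_pow] at hrel
  rw [map_sub, map_mul, map_pow, sub_mul, mul_assoc, polyToLoc_X_one_mul, polyToLoc_X_zero,
    polyToLoc_X_two]
  linear_combination hrel

theorem isUnit_polyToLoc (s : polySubmonoid n) : IsUnit (polyToLoc n s) := by
  refine Submonoid.isUnit_map_of_mem_closure (polyToLoc n) ?_ s.2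
  rintro _ (rfl | rfl)
  · simpa using IsLocalization.map_units 𝓛 ⟨_, t_mem_flopSubmonoid n⟩
  · simpa [polyToLoc_xw_sub] using IsLocalization.map_units 𝓛 ⟨_, y_mem_flopSubmonoid n⟩

noncomputable def fromPolyLoc : 𝓜 →ₐ[ℂ] 𝓛 :=
  IsLocalization.liftAlgHom (M := polySubmonoid n) (S := 𝓜) (P := 𝓛) (isUnit_polyToLoc n)

@[simp] theorem fromPolyLoc_algebraMap (p : MvPolynomial (Fin 3) ℂ) :
    fromPolyLoc n (algebraMap _ 𝓜 p) = polyToLoc n p :=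
  IsLocalization.lift_eq _ _

theorem toPolyLoc_polyToLoc_X_one :
    toPolyLoc n (polyToLoc n (X 1)) = algebraMap (MvPolynomial (Fin 3) ℂ) 𝓜 (X 1) := by
  refine (IsLocalization.map_units 𝓜 ⟨_, xw_sub_mem_polySubmonoid n⟩).mul_right_cancel ?_
  have h := congrArg (toPolyLoc n) (polyToLoc_X_one_mul n)
  simp only [map_mul, toPolyLoc_algebraMap, flopToPoly_mk, aeval_X, Matrix.cons_val] at h
  rw [h, ← map_mul, mul_comm]

theorem fromPolyLoc_comp_toPolyLoc : (fromPolyLoc n).comp (toPolyLoc n) = AlgHom.id ℂ 𝓛 := by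
  apply Localization.algHom_ext
  apply Ideal.Quotient.algHom_ext
  apply MvPolynomial.algHom_ext
  intro i
  dsimp only [AlgHom.comp_apply, Algebra.algHom, IsScalarTower.toAlgHom_apply, AlgHom.id_apply,
    Ideal.Quotient.mkₐ_eq_mk]
  fin_cases i <;> simp only [toPolyLoc_algebraMap, fromPolyLoc_algebraMap, flopToPoly_mk, aeval_X,
    Fin.zero_eta, Fin.mk_one, Fin.reduceFinMk, Matrix.cons_val, map_mul, polyToLoc_xw_sub,
    polyToLoc_X_zero, polyToLoc_X_two, polyToLoc_X_one_mul]

theorem toPolyLoc_comp_fromPolyLoc : (toPolyLoc n).comp (fromPolyLoc n) = AlgHom.id ℂ 𝓜 := by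
  apply Localization.algHom_ext
  apply MvPolynomial.algHom_ext
  intro i
  dsimp only [AlgHom.comp_apply, Algebra.algHom, IsScalarTower.toAlgHom_apply, AlgHom.id_apply]
  fin_cases i <;> simp only [fromPolyLoc_algebraMap, polyToLoc_X_zero, polyToLoc_X_two,
    toPolyLoc_polyToLoc_X_one, toPolyLoc_algebraMap, flopToPoly_mk, aeval_X, Fin.zero_eta,
    Fin.mk_one, Fin.reduceFinMk, Matrix.cons_val]

end Flop

theorem stmt3_general (n : ℕ) :
    ∃ e : Localization (flopSubmonoid n) ≃ₐ[ℂ] Localization (polySubmonoid n),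
      -- x ↦ x
      e (algebraMap (flopBase n) _ (Ideal.Quotient.mk _ (X 0))) =
        algebraMap (MvPolynomial (Fin 3) ℂ) _ (X 0) ∧
      -- t ↦ t
      e (algebraMap (flopBase n) _ (Ideal.Quotient.mk _ (X 3))) =
        algebraMap (MvPolynomial (Fin 3) ℂ) _ (X 2) ∧
      -- y ↦ xw − t^n
      e (algebraMap (flopBase n) _ (Ideal.Quotient.mk _ (X 1))) =
        algebraMap (MvPolynomial (Fin 3) ℂ) _ (X 0 * X 1 - X 2 ^ n) ∧
      -- z ↦ w(xw − t^n)
      e (algebraMap (flopBase n) _ (Ideal.Quotient.mk _ (X 2))) =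
        algebraMap (MvPolynomial (Fin 3) ℂ) _ (X 1 * (X 0 * X 1 - X 2 ^ n)) ∧
      -- the inverse sends w to z/y
      e.symm (algebraMap (MvPolynomial (Fin 3) ℂ) _ (X 1)) =
        Localization.mk (Ideal.Quotient.mk _ (X 2))
          ⟨Ideal.Quotient.mk _ (X 1),
            Submonoid.subset_closure (Set.mem_insert _ _)⟩ := by
  refine ⟨AlgEquiv.ofAlgHom (Flop.toPolyLoc n) (Flop.fromPolyLoc n)
    (Flop.toPolyLoc_comp_fromPolyLoc n) (Flop.fromPolyLoc_comp_toPolyLoc n), ?_, ?_, ?_, ?_,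
    (Flop.fromPolyLoc_algebraMap n _).trans (Flop.polyToLoc_X_one n)⟩ <;> simp

theorem stmt3 (n : ℕ) (hn : 1 ≤ n) :
    ∃ e : Localization (flopSubmonoid n) ≃ₐ[ℂ] Localization (polySubmonoid n),
      -- x ↦ x
      e (algebraMap (flopBase n) _ (Ideal.Quotient.mk _ (X 0))) =
        algebraMap (MvPolynomial (Fin 3) ℂ) _ (X 0) ∧
      -- t ↦ t
      e (algebraMap (flopBase n) _ (Ideal.Quotient.mk _ (X 3))) =
        algebraMap (MvPolynomial (Fin 3) ℂ) _ (X 2) ∧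
      -- y ↦ xw − t^n
      e (algebraMap (flopBase n) _ (Ideal.Quotient.mk _ (X 1))) =
        algebraMap (MvPolynomial (Fin 3) ℂ) _ (X 0 * X 1 - X 2 ^ n) ∧
      -- z ↦ w(xw − t^n)
      e (algebraMap (flopBase n) _ (Ideal.Quotient.mk _ (X 2))) =
        algebraMap (MvPolynomial (Fin 3) ℂ) _ (X 1 * (X 0 * X 1 - X 2 ^ n)) ∧
      -- the inverse sends w to z/y
      e.symm (algebraMap (MvPolynomial (Fin 3) ℂ) _ (X 1)) =
        Localization.mk (Ideal.Quotient.mk _ (X 2))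
          ⟨Ideal.Quotient.mk _ (X 1),
            Submonoid.subset_closure (Set.mem_insert _ _)⟩ :=
  stmt3_general n
end

section
/- Let n ≥ 1 be an integer and let A be the localization of R = C[x,y,z,t]/(xz − y(y+t^n)) at the multiplicative set generated by y and t. Then the family of elements of A consisting of the monomials x^a y^b t^c for integers a ≥ 1 and b, c ∈ Z, together with the monomials z^a y^b t^c for integers a ≥ 1 and b, c ∈ Z, together with the monomials y^b t^c for b, c ∈ Z, is a basis of A as a C-vector space. -/
open MvPolynomial

/-- `A = C[x, y^{±1}, z, t^{±1}]/(xz − y(y+t^n))`, the coordinate ring of the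
cluster variety `U`. -/
noncomputable abbrev clusterRing (n : ℕ) : Type := Localization (flopSubmonoid n)

/-- The theta-basis family: given units `uy`, `ut` of `A` (representing `y` and `t`),
it consists of the monomials `x^a y^b t^c` (`a ≥ 1`), the monomials `z^a y^b t^c`
(`a ≥ 1`), and the monomials `y^b t^c`. -/
noncomputable def thetaFamily (n : ℕ) (uy ut : (clusterRing n)ˣ) :
    (ℕ+ × ℤ × ℤ) ⊕ (ℕ+ × ℤ × ℤ) ⊕ (ℤ × ℤ) → clusterRing n
  | .inl (a, b, c) =>
      algebraMap (flopBase n) _ (Ideal.Quotient.mk _ (X 0)) ^ (a : ℕ) *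
        ((uy ^ b : (clusterRing n)ˣ) : clusterRing n) *
        ((ut ^ c : (clusterRing n)ˣ) : clusterRing n)
  | .inr (.inl (a, b, c)) =>
      algebraMap (flopBase n) _ (Ideal.Quotient.mk _ (X 2)) ^ (a : ℕ) *
        ((uy ^ b : (clusterRing n)ˣ) : clusterRing n) *
        ((ut ^ c : (clusterRing n)ˣ) : clusterRing n)
  | .inr (.inr (b, c)) =>
      ((uy ^ b : (clusterRing n)ˣ) : clusterRing n) *
        ((ut ^ c : (clusterRing n)ˣ) : clusterRing n)

/-!
Spanning: the span `M` of the monomials contains `1`, and the elements `a` with `M * a ⊆ M` form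
a subalgebra. It contains `y^{±1}` and `t^{±1}`, which only shift exponents, and `x` and `z`,
because of `z^(a+1) y^b t^c · x = z^a y^(b+2) t^c + z^a y^(b+1) t^(c+n)` and its mirror image.
These elements generate `A` as a `ℂ`-algebra, so `M = A`.

Independence: `x ↦ X`, `y ↦ Y`, `t ↦ T`, `z ↦ X⁻¹ Y (Y + Tⁿ)` defines an algebra map
`A → ℂ[Y^±1, T^±1][X^±1]` taking the monomial of `X`-degree `k` and `(y, t)`-exponent
`(b, c)` to `X^k (Y (Y + Tⁿ))^max(-k, 0) Y^b T^c`. Distinct monomials either have distinct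
`X`-degrees, or coefficients which are one fixed nonzero element times distinct monomials of
the domain `ℂ[Y^±1, T^±1]`; hence the images are linearly independent.
-/

theorem AddMonoidAlgebra.linearIndependent_single_mul {k R G κ : Type*} [CommSemiring k]
    [Semiring R] [Algebra k R] {b : κ → R} (hb : LinearIndependent k b) {w : G → R}
    (hw : ∀ g, IsLeftRegular (w g)) :
    LinearIndependent k fun p : G × κ => (single p.1 (w p.1 * b p.2) : AddMonoidAlgebra R G) := by
  have hfibre (g : G) : LinearIndependent k fun j => w g * b j :=
    hb.map_injOn (LinearMap.mulLeft k (w g)) (hw g).injOn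
  have hsigma := (Finsupp.linearIndependent_single _ hfibre).map_injOn
    (coeffLinearEquiv k).symm.toLinearMap (coeffLinearEquiv k).symm.injective.injOn
  exact (linearIndependent_equiv' (Equiv.sigmaEquivProd G κ) rfl).mp hsigma

theorem map_units_zpow_of_map_eq {F M N : Type*} [Monoid M] [Monoid N] [FunLike F M N]
    [MonoidHomClass F M N] (f : F) {u : Mˣ} {v : Nˣ} (h : f u = v) (m : ℤ) :
    f ↑(u ^ m) = ↑(v ^ m) := by
  have hu : Units.map (f : M →* N) u = v := Units.ext h
  rw [← hu, ← map_zpow]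
  rfl

def Submodule.mulStabilizer {k A : Type*} [CommSemiring k] [Semiring A] [Algebra k A]
    (M : Submodule k A) : Subalgebra k A where
  carrier := {a | ∀ m ∈ M, m * a ∈ M}
  mul_mem' ha hb m hm := mul_assoc m _ _ ▸ hb _ (ha m hm)
  add_mem' ha hb m hm := (mul_add m _ _).symm ▸ M.add_mem (ha m hm) (hb m hm)
  algebraMap_mem' c m hm := by
    rw [← Algebra.commutes, ← Algebra.smul_def]
    exact M.smul_mem c hm

theorem Submodule.mem_mulStabilizer_span {k A : Type*} [CommSemiring k] [Semiring A] [Algebra k A]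
    {s : Set A} {a : A} (h : ∀ m ∈ s, m * a ∈ span k s) : a ∈ (span k s).mulStabilizer := by
  intro m hm
  induction hm using Submodule.span_induction with
  | mem x hx => exact h x hx
  | zero => simp
  | add x y _ _ hx hy => rw [add_mul]; exact add_mem hx hy
  | smul c x _ hx => rw [smul_mul_assoc]; exact Submodule.smul_mem _ c hx

section LaurentMonomials

variable {k A : Type*} [CommSemiring k] [CommRing A] [Algebra k A]

def laurentMonomials (p : A) (u v : Aˣ) : Set A :=
  {m | ∃ (a : ℕ) (b c : ℤ), m = p ^ a * ↑(u ^ b) * ↑(v ^ c)}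

variable {p q : A} {u v : Aˣ}

open Submodule

theorem one_mem_laurentMonomials : (1 : A) ∈ laurentMonomials p u v :=
  ⟨0, 0, 0, by simp⟩

theorem mul_mem_laurentMonomials {m : A} (hm : m ∈ laurentMonomials p u v) :
    m * p ∈ laurentMonomials p u v := by
  obtain ⟨a, b, c, rfl⟩ := hm
  exact ⟨a + 1, b, c, by ring⟩

theorem mul_zpow_left_mem_laurentMonomials {m : A} (hm : m ∈ laurentMonomials p u v) (d : ℤ) :
    m * ↑(u ^ d) ∈ laurentMonomials p u v := by
  obtain ⟨a, b, c, rfl⟩ := hm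
  exact ⟨a, b + d, c, by rw [zpow_add, Units.val_mul]; ring⟩

theorem mul_zpow_right_mem_laurentMonomials {m : A} (hm : m ∈ laurentMonomials p u v) (e : ℤ) :
    m * ↑(v ^ e) ∈ laurentMonomials p u v := by
  obtain ⟨a, b, c, rfl⟩ := hm
  exact ⟨a, b, c + e, by rw [zpow_add, Units.val_mul]; ring⟩

theorem mul_mem_span_laurentMonomials_of_mul_eq {n : ℕ} (hpq : p * q = ↑u ^ 2 + ↑u * ↑v ^ n)
    {m : A} (hm : m ∈ laurentMonomials q u v) :
    m * p ∈ span k (laurentMonomials p u v ∪ laurentMonomials q u v) := by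
  obtain ⟨a, b, c, rfl⟩ := hm
  cases a with
  | zero => exact subset_span (.inl ⟨1, b, c, by ring⟩)
  | succ a =>
    have hsplit : q ^ (a + 1) * ↑(u ^ b) * ↑(v ^ c) * p =
        q ^ a * ↑(u ^ (b + 2)) * ↑(v ^ c) + q ^ a * ↑(u ^ (b + 1)) * ↑(v ^ (c + n)) := by
      simp only [zpow_add, zpow_natCast, zpow_ofNat, Units.val_mul, Units.val_pow_eq_pow_val]
      linear_combination q ^ a * ↑(u ^ b) * ↑(v ^ c) * hpq
    rw [hsplit]
    exact add_mem (subset_span (.inr ⟨a, _, _, rfl⟩)) (subset_span (.inr ⟨a, _, _, rfl⟩))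

theorem span_laurentMonomials_eq_top {n : ℕ} (hpq : p * q = ↑u ^ 2 + ↑u * ↑v ^ n)
    (hgen : Algebra.adjoin k {p, q, ↑u, ↑u⁻¹, ↑v, ↑v⁻¹} = ⊤) :
    span k (laurentMonomials p u v ∪ laurentMonomials q u v) = ⊤ := by
  set M := span k (laurentMonomials p u v ∪ laurentMonomials q u v)
  have hp : p ∈ M.mulStabilizer := mem_mulStabilizer_span fun m hm => hm.elim
    (fun hm => subset_span (.inl (mul_mem_laurentMonomials hm)))
    (mul_mem_span_laurentMonomials_of_mul_eq hpq)
  have hq : q ∈ M.mulStabilizer := by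
    rw [show M = span k (laurentMonomials q u v ∪ laurentMonomials p u v) by
      rw [Set.union_comm]]
    exact mem_mulStabilizer_span fun m hm => hm.elim
      (fun hm => subset_span (.inl (mul_mem_laurentMonomials hm)))
      (mul_mem_span_laurentMonomials_of_mul_eq (mul_comm q p ▸ hpq))
  have hu (d : ℤ) : ↑(u ^ d) ∈ M.mulStabilizer := mem_mulStabilizer_span fun _ hm => hm.elim
    (fun hm => subset_span (.inl (mul_zpow_left_mem_laurentMonomials hm d)))
    (fun hm => subset_span (.inr (mul_zpow_left_mem_laurentMonomials hm d)))
  have hv (e : ℤ) : ↑(v ^ e) ∈ M.mulStabilizer := mem_mulStabilizer_span fun _ hm => hm.elim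
    (fun hm => subset_span (.inl (mul_zpow_right_mem_laurentMonomials hm e)))
    (fun hm => subset_span (.inr (mul_zpow_right_mem_laurentMonomials hm e)))
  have hstab : Algebra.adjoin k {p, q, ↑u, ↑u⁻¹, ↑v, ↑v⁻¹} ≤ M.mulStabilizer := by
    simpa [Algebra.adjoin_le_iff, Set.insert_subset_iff] using
      ⟨hp, hq, by simpa using hu 1, by simpa using hu (-1), by simpa using hv 1,
        by simpa using hv (-1)⟩
  rw [eq_top_iff]
  intro a _
  simpa using hstab (hgen ▸ Algebra.mem_top) 1 (subset_span (.inl one_mem_laurentMonomials))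

end LaurentMonomials

theorem IsLocalization.subalgebra_eq_top_of_le_closure {k R S : Type*} [CommSemiring k]
    [CommSemiring R] [CommSemiring S] [Algebra k R] [Algebra k S] [Algebra R S]
    [IsScalarTower k R S] {M : Submonoid R} [IsLocalization M S] {s : Set R}
    (hM : M ≤ Submonoid.closure s) {B : Subalgebra k S} (hR : ∀ r, algebraMap R S r ∈ B)
    (hs : ∀ x ∈ s, ∃ b ∈ B, algebraMap R S x * b = 1) : B = ⊤ := by
  have hinv : M ≤ (B.toSubmonoid.leftInv).comap (algebraMap R S) :=
    hM.trans <| Submonoid.closure_le.mpr fun x hx => by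
      obtain ⟨b, hb, hxb⟩ := hs x hx
      exact ⟨⟨b, hb⟩, hxb⟩
  rw [eq_top_iff]
  intro z _
  obtain ⟨⟨r, m⟩, hz⟩ := IsLocalization.surj M z
  obtain ⟨⟨b, hb⟩, hmb⟩ := hinv m.2
  have : z = algebraMap R S r * b := by
    rw [← hz, mul_assoc, show algebraMap R S m * b = 1 from hmb, mul_one]
  exact this ▸ B.mul_mem (hR r) hb

namespace ClusterRing

variable (n : ℕ)

noncomputable abbrev var (i : Fin 4) : clusterRing n :=
  algebraMap (flopBase n) _ (Ideal.Quotient.mk _ (X i))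

noncomputable def yUnit : (clusterRing n)ˣ :=
  (IsLocalization.map_units (M := flopSubmonoid n) (clusterRing n)
    ⟨_, Submonoid.subset_closure (Set.mem_insert _ _)⟩).unit

noncomputable def tUnit : (clusterRing n)ˣ :=
  (IsLocalization.map_units (M := flopSubmonoid n) (clusterRing n)
    ⟨_, Submonoid.subset_closure (Set.mem_insert_of_mem _ rfl)⟩).unit

theorem val_yUnit : (yUnit n : clusterRing n) = var n 1 := IsUnit.unit_spec _

theorem val_tUnit : (tUnit n : clusterRing n) = var n 3 := IsUnit.unit_spec _

theorem var_zero_mul_var_two :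
    var n 0 * var n 2 = ↑(yUnit n) ^ 2 + ↑(yUnit n) * ↑(tUnit n) ^ n := by
  simp only [val_yUnit, val_tUnit, var, ← map_mul, ← map_pow, ← map_add]
  congr 1
  rw [Ideal.Quotient.eq]
  exact Ideal.subset_span (Set.mem_singleton_iff.mpr (by ring))

theorem range_thetaFamily (uy ut : (clusterRing n)ˣ) :
    Set.range (thetaFamily n uy ut) =
      laurentMonomials (var n 0) uy ut ∪ laurentMonomials (var n 2) uy ut := by
  ext m
  constructor
  · rintro ⟨(⟨a, b, c⟩ | ⟨a, b, c⟩ | ⟨b, c⟩), rfl⟩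
    · exact .inl ⟨a, b, c, rfl⟩
    · exact .inr ⟨a, b, c, rfl⟩
    · exact .inl ⟨0, b, c, by simp [thetaFamily]⟩
  · rintro (⟨a, b, c, rfl⟩ | ⟨a, b, c, rfl⟩) <;> rcases Nat.eq_zero_or_pos a with rfl | ha
    · exact ⟨.inr (.inr (b, c)), by simp [thetaFamily]⟩
    · exact ⟨.inl (⟨a, ha⟩, b, c), rfl⟩
    · exact ⟨.inr (.inr (b, c)), by simp [thetaFamily]⟩
    · exact ⟨.inr (.inl (⟨a, ha⟩, b, c)), rfl⟩

theorem adjoin_eq_top : Algebra.adjoin ℂ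
    {var n 0, var n 2, ↑(yUnit n), ↑(yUnit n)⁻¹, ↑(tUnit n), ↑(tUnit n)⁻¹} = ⊤ := by
  set B := Algebra.adjoin ℂ
    {var n 0, var n 2, ↑(yUnit n), ↑(yUnit n)⁻¹, ↑(tUnit n), ↑(tUnit n)⁻¹}
  have hvar (i : Fin 4) : var n i ∈ B := by
    fin_cases i
    · exact Algebra.subset_adjoin (by simp)
    · exact val_yUnit n ▸ Algebra.subset_adjoin (by simp)
    · exact Algebra.subset_adjoin (by simp)
    · exact val_tUnit n ▸ Algebra.subset_adjoin (by simp)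
  refine IsLocalization.subalgebra_eq_top_of_le_closure (M := flopSubmonoid n)
    (S := clusterRing n) le_rfl ?_ ?_
  · intro r
    obtain ⟨P, rfl⟩ := Ideal.Quotient.mk_surjective r
    let f := (IsScalarTower.toAlgHom ℂ (flopBase n) (clusterRing n)).comp
      (Ideal.Quotient.mkₐ ℂ _)
    have hX : Algebra.adjoin ℂ (Set.range X) ≤ B.comap f :=
      Algebra.adjoin_le (by rintro _ ⟨i, rfl⟩; exact hvar i)
    rw [adjoin_range_X] at hX
    exact hX Algebra.mem_top
  · simp only [Set.mem_insert_iff, Set.mem_singleton_iff, forall_eq_or_imp, forall_eq]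
    exact ⟨⟨_, Algebra.subset_adjoin (by simp), val_yUnit n ▸ Units.mul_inv _⟩,
      ⟨_, Algebra.subset_adjoin (by simp), val_tUnit n ▸ Units.mul_inv _⟩⟩

theorem span_thetaFamily_eq_top :
    Submodule.span ℂ (Set.range (thetaFamily n (yUnit n) (tUnit n))) = ⊤ := by
  rw [range_thetaFamily]
  exact span_laurentMonomials_eq_top (var_zero_mul_var_two n) (adjoin_eq_top n)

abbrev TorusRing : Type := AddMonoidAlgebra ℂ (ℤ × ℤ)

abbrev ModelRing : Type := AddMonoidAlgebra TorusRing ℤ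

open AddMonoidAlgebra

noncomputable def torusUnit : Multiplicative (ℤ × ℤ) →* ModelRingˣ :=
  (Units.map (algebraMap TorusRing ModelRing).toMonoidHom).comp
    ((Units.map (of ℂ (ℤ × ℤ))).comp toUnits.toMonoidHom)

theorem val_torusUnit (g : Multiplicative (ℤ × ℤ)) :
    (torusUnit g : ModelRing) = algebraMap TorusRing ModelRing (single g.toAdd 1) := rfl

noncomputable def zWeight : TorusRing :=
  single (1, 0) 1 * (single (1, 0) 1 + single (0, 1) 1 ^ n)

theorem zWeight_ne_zero : zWeight n ≠ 0 := by
  refine mul_ne_zero (by simp) fun h => ?_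
  have := congrArg (fun p : TorusRing => p.coeff (1, 0)) h
  simp [single_pow, AddMonoidAlgebra.coeff_add, coeff_single] at this

noncomputable def modelVar : Fin 4 → ModelRing :=
  ![single 1 1, torusUnit (.ofAdd (1, 0)), single (-1) (zWeight n), torusUnit (.ofAdd (0, 1))]

theorem aeval_modelVar_relation :
    aeval (modelVar n) (X 0 * X 2 - X 1 ^ 2 - X 1 * X 3 ^ n : MvPolynomial (Fin 4) ℂ) = 0 := by
  have hxz : single (1 : ℤ) (1 : TorusRing) * single (-1) (zWeight n) =
      algebraMap TorusRing ModelRing (zWeight n) := by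
    rw [single_mul_single, one_mul, add_neg_cancel]; rfl
  simp only [map_sub, map_mul, map_pow, aeval_X, modelVar, Matrix.cons_val, val_torusUnit,
    toAdd_ofAdd]
  rw [hxz, zWeight]
  simp only [map_mul, map_add, map_pow]
  ring

noncomputable def baseModelHom : flopBase n →ₐ[ℂ] ModelRing :=
  Ideal.Quotient.liftₐ _ (aeval (modelVar n)) fun a ha => by
    obtain ⟨c, rfl⟩ := Ideal.mem_span_singleton'.mp ha
    rw [map_mul, aeval_modelVar_relation, mul_zero]

theorem baseModelHom_mk_X (i : Fin 4) :
    baseModelHom n (Ideal.Quotient.mk _ (X i)) = modelVar n i :=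
  aeval_X _ _

theorem isUnit_baseModelHom (s : flopSubmonoid n) : IsUnit (baseModelHom n s) := by
  have hle : flopSubmonoid n ≤ (IsUnit.submonoid ModelRing).comap (baseModelHom n) := by
    refine Submonoid.closure_le.mpr (Set.insert_subset_iff.mpr ⟨?_, ?_⟩)
    · simp only [SetLike.mem_coe, Submonoid.mem_comap, baseModelHom_mk_X]
      exact Units.isUnit _
    · simp only [Set.singleton_subset_iff, SetLike.mem_coe, Submonoid.mem_comap,
        baseModelHom_mk_X]
      exact Units.isUnit _
  exact hle s.2

noncomputable def modelHom : clusterRing n →ₐ[ℂ] ModelRing :=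
  IsLocalization.liftAlgHom (M := flopSubmonoid n) (S := clusterRing n)
    (isUnit_baseModelHom n)

theorem modelHom_var (i : Fin 4) : modelHom n (var n i) = modelVar n i := by
  simp [modelHom, IsLocalization.liftAlgHom_apply, baseModelHom_mk_X]

theorem modelHom_monomial (b c : ℤ) :
    modelHom n (↑(yUnit n ^ b) * ↑(tUnit n ^ c)) = single 0 (single (b, c) 1) := by
  rw [map_mul, map_units_zpow_of_map_eq (modelHom n) (v := torusUnit (.ofAdd (1, 0))),
    map_units_zpow_of_map_eq (modelHom n) (v := torusUnit (.ofAdd (0, 1))), ← Units.val_mul,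
    ← map_zpow torusUnit, ← map_zpow torusUnit, ← map_mul torusUnit, val_torusUnit]
  · simp
  · rw [val_tUnit, modelHom_var]; rfl
  · rw [val_yUnit, modelHom_var]; rfl

def thetaDegree : (ℕ+ × ℤ × ℤ) ⊕ (ℕ+ × ℤ × ℤ) ⊕ (ℤ × ℤ) → ℤ × ℤ × ℤ
  | .inl (a, b, c) => (a, b, c)
  | .inr (.inl (a, b, c)) => (-a, b, c)
  | .inr (.inr (b, c)) => (0, b, c)

theorem thetaDegree_injective : Function.Injective thetaDegree := by
  rintro (⟨a, b, c⟩ | ⟨a, b, c⟩ | ⟨b, c⟩) (⟨a', b', c'⟩ | ⟨a', b', c'⟩ | ⟨b', c'⟩) h <;>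
    simp only [thetaDegree, Prod.mk.injEq, neg_inj, Nat.cast_inj, PNat.coe_inj] at h <;>
    grind [PNat.pos]

theorem modelHom_thetaFamily :
    modelHom n ∘ thetaFamily n (yUnit n) (tUnit n) =
      (fun p : ℤ × ℤ × ℤ => single p.1 (zWeight n ^ (-p.1).toNat * single p.2 1)) ∘
        thetaDegree := by
  funext i
  rcases i with ⟨a, b, c⟩ | ⟨a, b, c⟩ | ⟨b, c⟩
  · simp only [Function.comp_apply, thetaFamily, thetaDegree, mul_assoc]
    rw [map_mul, modelHom_monomial, map_pow, modelHom_var]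
    simp [modelVar]
  · simp only [Function.comp_apply, thetaFamily, thetaDegree, mul_assoc]
    rw [map_mul, modelHom_monomial, map_pow, modelHom_var]
    simp [modelVar, mul_pow, LaurentPolynomial.T_pow]
    ring
  · simp [thetaFamily, thetaDegree, modelHom_monomial]

theorem linearIndependent_thetaFamily :
    LinearIndependent ℂ (thetaFamily n (yUnit n) (tUnit n)) := by
  have hbasis : LinearIndependent ℂ fun g : ℤ × ℤ => (single g 1 : TorusRing) :=
    (basis (ℤ × ℤ) ℂ).linearIndependent
  have hmodel := linearIndependent_single_mul (G := ℤ) hbasis fun k =>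
    ((IsRegular.of_ne_zero (zWeight_ne_zero n)).pow (-k).toNat).left
  have htheta := hmodel.comp thetaDegree thetaDegree_injective
  rw [← modelHom_thetaFamily] at htheta
  exact htheta.of_comp (modelHom n).toLinearMap

end ClusterRing

theorem stmt4_general (n : ℕ) :
    ∃ uy ut : (clusterRing n)ˣ,
      (uy : clusterRing n) = algebraMap (flopBase n) _ (Ideal.Quotient.mk _ (X 1)) ∧
      (ut : clusterRing n) = algebraMap (flopBase n) _ (Ideal.Quotient.mk _ (X 3)) ∧
      LinearIndependent ℂ (thetaFamily n uy ut) ∧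
      Submodule.span ℂ (Set.range (thetaFamily n uy ut)) = ⊤ :=
  ⟨ClusterRing.yUnit n, ClusterRing.tUnit n, ClusterRing.val_yUnit n, ClusterRing.val_tUnit n,
    ClusterRing.linearIndependent_thetaFamily n, ClusterRing.span_thetaFamily_eq_top n⟩

theorem stmt4 (n : ℕ) (hn : 1 ≤ n) :
    ∃ uy ut : (clusterRing n)ˣ,
      (uy : clusterRing n) = algebraMap (flopBase n) _ (Ideal.Quotient.mk _ (X 1)) ∧
      (ut : clusterRing n) = algebraMap (flopBase n) _ (Ideal.Quotient.mk _ (X 3)) ∧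
      LinearIndependent ℂ (thetaFamily n uy ut) ∧
      Submodule.span ℂ (Set.range (thetaFamily n uy ut)) = ⊤ :=
  stmt4_general n
end

section
/- Fix an integer n ≥ 1. Let φ be the C-algebra homomorphism from the polynomial ring C[X_1, …, X_{n+3}] to the Laurent polynomial ring C[u^{±1}, v^{±1}, w^{±1}] determined by X_1 ↦ uv(1+u), X_2 ↦ v(1+u), X_3 ↦ w, and X_{i+3} ↦ u^i v^i w for i = 1, …, n. Then the kernel of φ is exactly the ideal generated by the 2×2 minors of the 2×(n+1) matrix whose columns are (X_1 + X_2, X_1 X_2) and (X_{k+2}, X_{k+3}) for k = 1, …, n (i.e. whose first row is (X_1+X_2, X_3, X_4, …, X_{n+2}) and second row is (X_1 X_2, X_4, X_5, …, X_{n+3})). -/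
open MvPolynomial

/-- The Laurent polynomial ring `C[u^{±1}, v^{±1}, w^{±1}]`, realised as the group
algebra of `ℤ³` over `ℂ`. -/
noncomputable abbrev LaurentRing : Type := AddMonoidAlgebra ℂ (Fin 3 → ℤ)

/-- The Laurent monomial `u`. -/
noncomputable def uL : LaurentRing := AddMonoidAlgebra.single ![1, 0, 0] 1

/-- The Laurent monomial `v`. -/
noncomputable def vL : LaurentRing := AddMonoidAlgebra.single ![0, 1, 0] 1

/-- The Laurent monomial `w`. -/
noncomputable def wL : LaurentRing := AddMonoidAlgebra.single ![0, 0, 1] 1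

/-- The images of the variables `X_1, …, X_{n+3}` (0-indexed as `X 0, …, X (n+2)`):
`X_1 ↦ uv(1+u)`, `X_2 ↦ v(1+u)`, `X_3 ↦ w`, and `X_{i+3} ↦ u^i v^i w` for `i = 1, …, n`. -/
noncomputable def thetaOf (n : ℕ) : Fin (n + 3) → LaurentRing := fun i =>
  if (i : ℕ) = 0 then uL * vL * (1 + uL)
  else if (i : ℕ) = 1 then vL * (1 + uL)
  else if (i : ℕ) = 2 then wL
  else (uL * vL) ^ ((i : ℕ) - 2) * wL

/-- First row `(X_1 + X_2, X_3, X_4, …, X_{n+2})` of the matrix of the presentation. -/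
noncomputable def row1 (n : ℕ) : Fin (n + 1) → MvPolynomial (Fin (n + 3)) ℂ := fun k =>
  if (k : ℕ) = 0 then X 0 + X 1 else X ⟨(k : ℕ) + 1, by omega⟩

/-- Second row `(X_1 X_2, X_4, X_5, …, X_{n+3})` of the matrix of the presentation. -/
noncomputable def row2 (n : ℕ) : Fin (n + 1) → MvPolynomial (Fin (n + 3)) ℂ := fun k =>
  if (k : ℕ) = 0 then X 0 * X 1 else X ⟨(k : ℕ) + 2, by have := k.isLt; omega⟩

/-!
The minors vanish under the substitution because the second row maps to `uv` times the first.
Conversely, modulo the minors (with `x = X_1`, `y = X_2`, `z_k = X_{k+3}`) the relations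
`z_i z_{j+1} = z_{i+1} z_j` sort the `z`'s and `x y z_k = (x + y) z_{k+1}` trades a factor `x y`
for a higher `z`-weight `∑ k`, so every monomial reduces to a combination of the monomials
`x^a y^b z_n^q z_r z_0^e` with `a = 0`, `b = 0` or `r = e = 0`. Writing `M = n q + r` and
`d = q + e + [r ≠ 0]`, the image of such a monomial is `u^(a+M) v^(a+b+M) w^d (1 + u)^(a+b)`, and
these are linearly independent: in each `(v, w)`-degree one of them is isolated by the lowest or
the highest power of `u` it contains. Hence the induced map on the quotient is injective.
-/

theorem linearIndependent_of_forall_exists_pivot {ι K V : Type*} [Ring K] [NoZeroDivisors K]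
    [AddCommGroup V] [Module K V] {v : ι → V}
    (h : ∀ s : Finset ι, s.Nonempty →
      ∃ i ∈ s, ∃ f : V →ₗ[K] K, f (v i) ≠ 0 ∧ ∀ j ∈ s, j ≠ i → f (v j) = 0) :
    LinearIndependent K v := by
  rw [linearIndependent_iff]
  intro l hl
  by_contra hne
  obtain ⟨i, hi, f, hfi, hf⟩ := h l.support (Finsupp.support_nonempty_iff.mpr hne)
  have hli : l i * f (v i) = 0 := by
    have := congrArg f hl
    rwa [Finsupp.linearCombination_apply, Finsupp.sum, map_sum, map_zero,
      Finset.sum_eq_single i (fun j hj hji => by rw [map_smul, hf j hj hji, smul_zero])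
        (fun h => absurd hi h), map_smul, smul_eq_mul] at this
  exact Finsupp.mem_support_iff.mp hi ((mul_eq_zero.mp hli).resolve_right hfi)

namespace ThetaPresentation

variable {n : ℕ}

noncomputable def minorIdeal (n : ℕ) : Ideal (MvPolynomial (Fin (n + 3)) ℂ) :=
  Ideal.span {m | ∃ i j : Fin (n + 1), m = row1 n i * row2 n j - row1 n j * row2 n i}

local notation "π" => Ideal.Quotient.mk (minorIdeal _)

/-- The variable `z_k = X_{k+3}`, with `k` clamped to `n` so that no bound proof is needed. -/
noncomputable def zVar (n k : ℕ) : MvPolynomial (Fin (n + 3)) ℂ :=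
  X ⟨min k n + 2, by omega⟩

/-- The monomial `z_n^q z_r z_0^e` of degree `d` and weight `M = n q + r` (for `M ≤ n d`):
the normal form of the `z`-monomials of that degree and weight modulo the minors. -/
noncomputable def zMon (n : ℕ) : ℕ → ℕ → MvPolynomial (Fin (n + 3)) ℂ
  | _, 0 => 1
  | M, d + 1 => zVar n (min M n) * zMon n (M - min M n) d

lemma zVar_of_le {k : ℕ} (hk : k ≤ n) : zVar n k = X ⟨k + 2, by omega⟩ := by
  simp only [zVar, min_eq_left hk]

lemma row1_succ {k : ℕ} (hk : k < n) : row1 n ⟨k + 1, by omega⟩ = zVar n k := by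
  rw [row1, if_neg k.succ_ne_zero, zVar_of_le hk.le]

lemma row2_succ {k : ℕ} (hk : k < n) : row2 n ⟨k + 1, by omega⟩ = zVar n (k + 1) := by
  rw [row2, if_neg k.succ_ne_zero, zVar_of_le hk]

lemma row1_zero : row1 n 0 = X 0 + X 1 := if_pos rfl

lemma row2_zero : row2 n 0 = X 0 * X 1 := if_pos rfl

lemma zMon_succ (M d : ℕ) : zMon n M (d + 1) = zVar n (min M n) * zMon n (M - min M n) d := rfl

lemma minor_mem_minorIdeal (i j : Fin (n + 1)) :
    row1 n i * row2 n j - row1 n j * row2 n i ∈ minorIdeal n :=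
  Ideal.subset_span ⟨i, j, rfl⟩

lemma mk_zVar_mul_zVar_succ {i j : ℕ} (hi : i < n) (hj : j < n) :
    π (zVar n i * zVar n (j + 1)) = π (zVar n (i + 1) * zVar n j) := by
  rw [Ideal.Quotient.eq]
  have h := minor_mem_minorIdeal (n := n) ⟨i + 1, by omega⟩ ⟨j + 1, by omega⟩
  rw [row1_succ hi, row2_succ hj, row1_succ hj, row2_succ hi] at h
  convert h using 1
  ring

lemma mk_xy_mul_zVar {k : ℕ} (hk : k < n) :
    π (X 0 * X 1 * zVar n k) = π ((X 0 + X 1) * zVar n (k + 1)) := by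
  rw [Ideal.Quotient.eq]
  have h := minor_mem_minorIdeal (n := n) 0 ⟨k + 1, by omega⟩
  rw [row1_zero, row2_zero, row1_succ hk, row2_succ hk] at h
  rw [← neg_mem_iff]
  convert h using 1
  ring

lemma mk_zVar_mul_zVar {i j : ℕ} (hi : i ≤ n) (hj : j ≤ n) :
    π (zVar n i * zVar n j) = π (zVar n (min (i + j) n) * zVar n (i + j - min (i + j) n)) := by
  induction j generalizing i with
  | zero => rw [show min (i + 0) n = i by omega, show i + 0 - i = 0 by omega]
  | succ j ih =>
    rcases hi.lt_or_eq with hi | rfl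
    · rw [mk_zVar_mul_zVar_succ hi (by omega), ih (by omega) (by omega),
        show i + 1 + j = i + (j + 1) by omega]
    · rw [show min (i + (j + 1)) i = i by omega, show i + (j + 1) - i = j + 1 by omega]

lemma mk_zVar_mul_zMon {k M d : ℕ} (hk : k ≤ n) (hM : M ≤ n * d) :
    π (zVar n k * zMon n M d) = π (zMon n (M + k) (d + 1)) := by
  induction d generalizing k M with
  | zero => simp [zMon, show M = 0 by simpa using hM, min_eq_left hk]
  | succ d ih =>
    rw [Nat.mul_succ] at hM
    have hm : min (k + min M n) n = min (M + k) n := by omega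
    calc π (zVar n k * zMon n M (d + 1))
        = π (zVar n k * zVar n (min M n)) * π (zMon n (M - min M n) d) := by
          rw [zMon_succ, ← map_mul, mul_assoc]
      _ = π (zVar n (min (M + k) n)) *
            π (zVar n (k + min M n - min (M + k) n) * zMon n (M - min M n) d) := by
          rw [mk_zVar_mul_zVar hk (min_le_right M n), hm, map_mul, map_mul, mul_assoc]
      _ = π (zMon n (M + k) (d + 1 + 1)) := by
          rw [ih (by omega) (by omega), ← map_mul, zMon_succ (M + k),
            show M - min M n + (k + min M n - min (M + k) n) = M + k - min (M + k) n by omega]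

lemma mk_xy_mul_zMon {M d : ℕ} (hM : M < n * d) :
    π (X 0 * X 1 * zMon n M d) = π ((X 0 + X 1) * zMon n (M + 1) d) := by
  induction d generalizing M with
  | zero => simp at hM
  | succ d ih =>
    rw [Nat.mul_succ] at hM
    rcases lt_or_ge M n with hMn | hMn
    · have hrel := mk_xy_mul_zVar hMn
      rw [zMon_succ, zMon_succ, min_eq_left hMn.le, min_eq_left hMn, Nat.sub_self, Nat.sub_self]
      simp only [map_mul, map_add] at hrel ⊢
      linear_combination π (zMon n 0 d) * hrel
    · have hrel := ih (M := M - n) (by omega)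
      rw [zMon_succ, zMon_succ, min_eq_right hMn, min_eq_right (by omega : n ≤ M + 1),
        show M + 1 - n = M - n + 1 by omega]
      simp only [map_mul, map_add] at hrel ⊢
      linear_combination π (zVar n n) * hrel

/-- Exponents of the monomials `x^a y^b zMon M d` to which `x y z_k ↦ (x + y) z_{k+1}` no longer
applies; their classes form a `ℂ`-basis of the quotient by the minors. -/
@[ext]
structure CanonicalExponent (n : ℕ) where
  xDeg : ℕ
  yDeg : ℕ
  weight : ℕ
  zDeg : ℕ
  weight_le : weight ≤ n * zDeg
  reduced : xDeg = 0 ∨ yDeg = 0 ∨ weight = n * zDeg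

noncomputable def canMon (p : CanonicalExponent n) : MvPolynomial (Fin (n + 3)) ℂ :=
  X 0 ^ p.xDeg * X 1 ^ p.yDeg * zMon n p.weight p.zDeg

noncomputable def canonicalSpan (n : ℕ) :
    Submodule ℂ (MvPolynomial (Fin (n + 3)) ℂ ⧸ minorIdeal n) :=
  Submodule.span ℂ (Set.range fun p : CanonicalExponent n => π (canMon p))

theorem mk_mem_canonicalSpan (a b M d : ℕ) (h : M ≤ n * d) :
    π (X 0 ^ a * X 1 ^ b * zMon n M d) ∈ canonicalSpan n := by
  by_cases hred : a = 0 ∨ b = 0 ∨ M = n * d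
  · exact Submodule.subset_span ⟨⟨a, b, M, d, h, hred⟩, rfl⟩
  simp only [not_or] at hred
  obtain ⟨a, rfl⟩ : ∃ a', a = a' + 1 := ⟨a - 1, by omega⟩
  obtain ⟨b, rfl⟩ : ∃ b', b = b' + 1 := ⟨b - 1, by omega⟩
  have hrel := mk_xy_mul_zMon (lt_of_le_of_ne h hred.2.2)
  have hsplit : π (X 0 ^ (a + 1) * X 1 ^ (b + 1) * zMon n M d) =
      π (X 0 ^ (a + 1) * X 1 ^ b * zMon n (M + 1) d) +
        π (X 0 ^ a * X 1 ^ (b + 1) * zMon n (M + 1) d) := by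
    simp only [map_mul, map_pow, map_add] at hrel ⊢
    linear_combination π (X 0) ^ a * π (X 1) ^ b * hrel
  rw [hsplit]
  exact add_mem (mk_mem_canonicalSpan _ _ _ _ (by omega)) (mk_mem_canonicalSpan _ _ _ _ (by omega))
termination_by n * d - M

lemma mk_canMon_mul_X_mem (p : CanonicalExponent n) (i : Fin (n + 3)) :
    π (canMon p * X i) ∈ canonicalSpan n := by
  have hp := p.weight_le
  obtain ⟨i, hi⟩ := i
  rcases i with _ | _ | k
  · rw [show (⟨0, hi⟩ : Fin (n + 3)) = 0 from rfl]
    convert mk_mem_canonicalSpan (n := n) (p.xDeg + 1) p.yDeg _ _ hp using 2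
    rw [canMon]
    ring
  · rw [show (⟨0 + 1, hi⟩ : Fin (n + 3)) = 1 from rfl]
    convert mk_mem_canonicalSpan (n := n) p.xDeg (p.yDeg + 1) _ _ hp using 2
    rw [canMon]
    ring
  · convert mk_mem_canonicalSpan (n := n) p.xDeg p.yDeg (p.weight + k) (p.zDeg + 1)
      (by rw [Nat.mul_succ]; omega) using 1
    rw [← zVar_of_le (by omega), canMon]
    simp only [map_mul]
    rw [← mk_zVar_mul_zMon (k := k) (by omega) hp, map_mul]
    ring

lemma mul_mk_X_mem_canonicalSpan {q : MvPolynomial (Fin (n + 3)) ℂ ⧸ minorIdeal n}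
    (hq : q ∈ canonicalSpan n) (i : Fin (n + 3)) : q * π (X i) ∈ canonicalSpan n := by
  unfold canonicalSpan at *
  induction hq using Submodule.span_induction with
  | mem q hq =>
    obtain ⟨p, rfl⟩ := hq
    rw [← map_mul]
    exact mk_canMon_mul_X_mem p i
  | zero => rw [zero_mul]; exact zero_mem _
  | add q r _ _ hq hr => rw [add_mul]; exact add_mem hq hr
  | smul c q _ hq => rw [smul_mul_assoc]; exact Submodule.smul_mem _ c hq

theorem canonicalSpan_eq_top : canonicalSpan n = ⊤ := by
  refine Submodule.eq_top_iff'.mpr fun q => ?_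
  obtain ⟨f, rfl⟩ := Ideal.Quotient.mk_surjective q
  induction f using MvPolynomial.induction_on with
  | C c =>
    let one : CanonicalExponent n := ⟨0, 0, 0, 0, le_rfl, Or.inl rfl⟩
    have hC : π (C c) = c • π (canMon one) := by
      rw [show canMon one = 1 by simp [one, canMon, zMon], map_one,
        ← Algebra.algebraMap_eq_smul_one, ← Ideal.Quotient.mk_algebraMap,
        MvPolynomial.algebraMap_eq]
    rw [hC]
    exact Submodule.smul_mem _ _ (Submodule.subset_span ⟨_, rfl⟩)
  | add f g hf hg => rw [map_add]; exact add_mem hf hg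
  | mul_X f i hf => rw [map_mul]; exact mul_mk_X_mem_canonicalSpan hf i

lemma thetaOf_zero : thetaOf n 0 = uL * vL * (1 + uL) := if_pos rfl

lemma thetaOf_one : thetaOf n 1 = vL * (1 + uL) := (if_neg one_ne_zero).trans (if_pos rfl)

lemma aeval_zVar {k : ℕ} (hk : k ≤ n) : aeval (thetaOf n) (zVar n k) = (uL * vL) ^ k * wL := by
  rw [zVar_of_le hk, aeval_X, thetaOf]
  rcases k with _ | k <;> simp

lemma aeval_zMon {M d : ℕ} (h : M ≤ n * d) :
    aeval (thetaOf n) (zMon n M d) = (uL * vL) ^ M * wL ^ d := by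
  induction d generalizing M with
  | zero => simp [zMon, show M = 0 by simpa using h]
  | succ d ih =>
    rw [Nat.mul_succ] at h
    rw [zMon_succ, map_mul, aeval_zVar (min_le_right M n), ih (by omega), pow_succ wL,
      ← pow_mul_pow_sub (uL * vL) (min_le_left M n)]
    ring

lemma aeval_row2 (k : Fin (n + 1)) :
    aeval (thetaOf n) (row2 n k) = uL * vL * aeval (thetaOf n) (row1 n k) := by
  obtain ⟨k, hk⟩ := k
  rcases k with _ | k
  · rw [show (⟨0, hk⟩ : Fin (n + 1)) = 0 from rfl, row1_zero, row2_zero]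
    simp only [map_mul, map_add, aeval_X, thetaOf_zero, thetaOf_one]
    ring
  · rw [row1_succ (by omega), row2_succ (by omega), aeval_zVar (by omega), aeval_zVar (by omega)]
    ring

lemma aeval_eq_zero_of_mem_minorIdeal (f : MvPolynomial (Fin (n + 3)) ℂ)
    (hf : f ∈ minorIdeal n) :
    aeval (thetaOf n) f = 0 := by
  induction hf using Submodule.span_induction with
  | mem f hf =>
    obtain ⟨i, j, rfl⟩ := hf
    simp only [map_sub, map_mul, aeval_row2]
    ring
  | zero => exact map_zero _
  | add f g _ _ hf hg => rw [map_add, hf, hg, add_zero]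
  | smul c f _ hf => rw [smul_eq_mul, map_mul, hf, mul_zero]

noncomputable def thetaMon (a b M d : ℕ) : LaurentRing :=
  uL ^ (a + M) * vL ^ (a + b + M) * wL ^ d * (1 + uL) ^ (a + b)

lemma aeval_canMon (p : CanonicalExponent n) :
    aeval (thetaOf n) (canMon p) = thetaMon p.xDeg p.yDeg p.weight p.zDeg := by
  simp only [canMon, map_mul, map_pow, aeval_X, aeval_zMon p.weight_le, thetaMon, thetaOf_zero,
    thetaOf_one, mul_pow]
  ring

lemma uL_pow_mul_vL_pow_mul_wL_pow (i j k : ℕ) :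
    uL ^ i * vL ^ j * wL ^ k = AddMonoidAlgebra.single ![(i : ℤ), j, k] 1 := by
  simp only [uL, vL, wL, AddMonoidAlgebra.single_pow, AddMonoidAlgebra.single_mul_single,
    one_pow, mul_one]
  congr 1
  ext x
  fin_cases x <;> simp

lemma thetaMon_eq_sum (a b M d : ℕ) :
    thetaMon a b M d = ∑ t ∈ Finset.range (a + b + 1),
      AddMonoidAlgebra.single ![((a + M + t : ℕ) : ℤ), ((a + b + M : ℕ) : ℤ), d]
        ((a + b).choose t : ℂ) := by
  rw [thetaMon, add_comm 1 uL, add_pow, Finset.mul_sum]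
  refine Finset.sum_congr rfl fun t _ => ?_
  rw [one_pow, mul_one,
    show uL ^ (a + M) * vL ^ (a + b + M) * wL ^ d * (uL ^ t * ((a + b).choose t)) =
      uL ^ (a + M + t) * vL ^ (a + b + M) * wL ^ d * ((a + b).choose t : LaurentRing) by ring,
    uL_pow_mul_vL_pow_mul_wL_pow, AddMonoidAlgebra.natCast_def,
    AddMonoidAlgebra.single_mul_single, add_zero, one_mul]

lemma coeff_thetaMon (a b M d i j k : ℕ) :
    (thetaMon a b M d).coeff ![(i : ℤ), j, k] =
      if j = a + b + M ∧ k = d ∧ a + M ≤ i then ((a + b).choose (i - (a + M)) : ℂ)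
      else 0 := by
  rw [thetaMon_eq_sum, AddMonoidAlgebra.coeff_sum, Finset.sum_apply']
  simp only [AddMonoidAlgebra.coeff_single, Finsupp.single_apply, Matrix.vecCons_inj,
    Nat.cast_inj, and_true]
  split_ifs with h
  · obtain ⟨rfl, rfl, h⟩ := h
    rw [Finset.sum_eq_single (i - (a + M))]
    · simp [show a + M + (i - (a + M)) = i by omega]
    · intro t _ ht
      rw [if_neg (by omega)]
    · intro ht
      rw [Finset.mem_range, not_lt] at ht
      simp [Nat.choose_eq_zero_of_lt (show a + b < i - (a + M) by omega)]
  · refine Finset.sum_eq_zero fun t _ => if_neg ?_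
    omega

lemma CanonicalExponent.eq_of_yDeg_pos {p q : CanonicalExponent n} (hd : p.zDeg = q.zDeg)
    (hy : p.yDeg = q.yDeg) (hpos : 0 < p.yDeg) (hxw : p.xDeg + p.weight = q.xDeg + q.weight) :
    p = q := by
  have hp := p.weight_le
  have hpr := p.reduced
  have hq := q.weight_le
  have hqr := q.reduced
  rw [hd] at hp hpr
  ext <;> omega

/-- Within one `(v, w)`-degree, the coefficient of the lowest power of `u` isolates the element
with `yDeg > 0` of least `xDeg + weight`; if every `yDeg` vanishes, the coefficient of the highest
power isolates the element of largest `xDeg`. -/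
lemma exists_pivot_of_homogeneous (s : Finset (CanonicalExponent n)) (hs : s.Nonempty) (V d : ℕ)
    (hV : ∀ q ∈ s, q.xDeg + q.yDeg + q.weight = V ∧ q.zDeg = d) :
    ∃ p ∈ s, ∃ i : ℕ,
      (thetaMon p.xDeg p.yDeg p.weight p.zDeg).coeff ![(i : ℤ), V, d] ≠ 0 ∧
      ∀ q ∈ s, q ≠ p →
        (thetaMon q.xDeg q.yDeg q.weight q.zDeg).coeff ![(i : ℤ), V, d] = 0 := by
  by_cases hpos : ∃ q ∈ s, 0 < q.yDeg
  · obtain ⟨p, hp, hmin⟩ :=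
      (s.filter (0 < ·.yDeg)).exists_min_image (fun q => q.xDeg + q.weight)
      (by obtain ⟨q, hq, hq'⟩ := hpos; exact ⟨q, Finset.mem_filter.mpr ⟨hq, hq'⟩⟩)
    rw [Finset.mem_filter] at hp
    obtain ⟨hpV, hpd⟩ := hV p hp.1
    refine ⟨p, hp.1, p.xDeg + p.weight, ?_, fun q hq hqp => ?_⟩
    · rw [coeff_thetaMon, if_pos ⟨hpV.symm, hpd.symm, le_rfl⟩]
      simp
    · obtain ⟨hqV, hqd⟩ := hV q hq
      rw [coeff_thetaMon, if_neg]
      rintro ⟨-, -, hle⟩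
      rcases Nat.eq_zero_or_pos q.yDeg with hq0 | hq0
      · omega
      · have := hmin q (Finset.mem_filter.mpr ⟨hq, hq0⟩)
        exact hqp (CanonicalExponent.eq_of_yDeg_pos (by omega) (by omega) hq0 (by omega))
  · simp only [not_exists, not_and, not_lt, nonpos_iff_eq_zero] at hpos
    obtain ⟨p, hp, hmax⟩ := s.exists_max_image (·.xDeg) hs
    obtain ⟨hpV, hpd⟩ := hV p hp
    have hp0 := hpos p hp
    refine ⟨p, hp, V + p.xDeg, ?_, fun q hq hqp => ?_⟩
    · rw [coeff_thetaMon, if_pos ⟨hpV.symm, hpd.symm, by omega⟩,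
        show V + p.xDeg - (p.xDeg + p.weight) = p.xDeg + p.yDeg by omega, Nat.choose_self]
      simp
    · obtain ⟨hqV, hqd⟩ := hV q hq
      have hq0 := hpos q hq
      have hqx := hmax q hq
      rw [coeff_thetaMon]
      split_ifs
      · rcases hqx.lt_or_eq with hlt | heq
        · rw [Nat.choose_eq_zero_of_lt (by omega), Nat.cast_zero]
        · exact absurd (CanonicalExponent.ext heq (by omega) (by omega) (by omega)) hqp
      · rfl

lemma exists_pivot (s : Finset (CanonicalExponent n)) (hs : s.Nonempty) :
    ∃ p ∈ s, ∃ g : Fin 3 → ℤ, (thetaMon p.xDeg p.yDeg p.weight p.zDeg).coeff g ≠ 0 ∧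
      ∀ q ∈ s, q ≠ p → (thetaMon q.xDeg q.yDeg q.weight q.zDeg).coeff g = 0 := by
  obtain ⟨p₀, hp₀⟩ := hs
  let V := p₀.xDeg + p₀.yDeg + p₀.weight
  let t := s.filter fun q => q.xDeg + q.yDeg + q.weight = V ∧ q.zDeg = p₀.zDeg
  obtain ⟨p, hp, i, hpi, hq⟩ := exists_pivot_of_homogeneous t
    ⟨p₀, Finset.mem_filter.mpr ⟨hp₀, rfl, rfl⟩⟩ V p₀.zDeg
    fun q hq => (Finset.mem_filter.mp hq).2
  refine ⟨p, (Finset.mem_filter.mp hp).1, _, hpi, fun q hqs hqp => ?_⟩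
  by_cases hqt : q.xDeg + q.yDeg + q.weight = V ∧ q.zDeg = p₀.zDeg
  · exact hq q (Finset.mem_filter.mpr ⟨hqs, hqt⟩) hqp
  · rw [coeff_thetaMon, if_neg]
    rintro ⟨h1, h2, -⟩
    exact hqt ⟨h1.symm, h2.symm⟩

theorem linearIndependent_aeval_canMon :
    LinearIndependent ℂ fun p : CanonicalExponent n => aeval (thetaOf n) (canMon p) := by
  refine linearIndependent_of_forall_exists_pivot fun s hs => ?_
  obtain ⟨p, hp, g, hpg, hq⟩ := exists_pivot s hs
  refine ⟨p, hp, Finsupp.lapply g ∘ₗ (AddMonoidAlgebra.coeffLinearEquiv ℂ).toLinearMap, ?_,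
    fun q hqs hqp => ?_⟩
  · simpa [aeval_canMon] using hpg
  · simpa [aeval_canMon] using hq q hqs hqp

end ThetaPresentation

open ThetaPresentation in
theorem stmt7_general (n : ℕ) :
    RingHom.ker (aeval (thetaOf n) : MvPolynomial (Fin (n + 3)) ℂ →ₐ[ℂ] LaurentRing) =
      Ideal.span {m | ∃ i j : Fin (n + 1),
        m = row1 n i * row2 n j - row1 n j * row2 n i} := by
  refine (Ideal.injective_lift_iff aeval_eq_zero_of_mem_minorIdeal).mp ?_
  refine LinearMap.injective_of_linearIndependent
    (f := (Ideal.Quotient.liftₐ (minorIdeal n) (aeval (thetaOf n))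
      aeval_eq_zero_of_mem_minorIdeal).toLinearMap)
    canonicalSpan_eq_top ?_
  exact linearIndependent_aeval_canMon

theorem stmt7 (n : ℕ) (hn : 1 ≤ n) :
    RingHom.ker (aeval (thetaOf n) : MvPolynomial (Fin (n + 3)) ℂ →ₐ[ℂ] LaurentRing) =
      Ideal.span {m | ∃ i j : Fin (n + 1),
        m = row1 n i * row2 n j - row1 n j * row2 n i} :=
  stmt7_general n
end

section
/- Fix an integer n ≥ 1. In the polynomial ring C[α_0, α_1, X_1, …, X_{n+3}], the element α_1^n · X_3 − α_0^n · X_{n+3} lies in the ideal generated by the 2×2 minors of the 2×(n+2) matrix whose columns are (α_0, α_1), (X_1 + X_2, X_1 X_2), and (X_{k+2}, X_{k+3}) for k = 1, …, n. -/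
open MvPolynomial

/-- First row `(α_0, X_1 + X_2, X_3, X_4, …, X_{n+2})` of the matrix defining the
small resolution `W`. The variables of `C[α_0, α_1, X_1, …, X_{n+3}]` are indexed
by `Fin (n+5)`: `α_0 = X 0`, `α_1 = X 1`, and `X_j = X (j+1)` for `j = 1, …, n+3`. -/
noncomputable def resRow1 (n : ℕ) : Fin (n + 2) → MvPolynomial (Fin (n + 5)) ℂ := fun k =>
  if (k : ℕ) = 0 then X 0
  else if (k : ℕ) = 1 then X 2 + X 3
  else X ⟨(k : ℕ) + 2, by omega⟩

/-- Second row `(α_1, X_1 X_2, X_4, X_5, …, X_{n+3})` of the matrix defining the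
small resolution `W`. -/
noncomputable def resRow2 (n : ℕ) : Fin (n + 2) → MvPolynomial (Fin (n + 5)) ℂ := fun k =>
  if (k : ℕ) = 0 then X 1
  else if (k : ℕ) = 1 then X 2 * X 3
  else X ⟨(k : ℕ) + 3, by omega⟩

theorem pow_mul_eq_pow_mul_of_forall_lt {R : Type*} [CommSemiring R] {a b : R} {y : ℕ → R}
    {m : ℕ} (h : ∀ k < m, a * y (k + 1) = b * y k) : b ^ m * y 0 = a ^ m * y m := by
  induction m with
  | zero => simp
  | succ m ih =>
    calc b ^ (m + 1) * y 0 = b * (b ^ m * y 0) := by ring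
      _ = a ^ m * (b * y m) := by rw [ih fun k hk => h k (by omega)]; ring
      _ = a ^ (m + 1) * y (m + 1) := by rw [← h m (by omega)]; ring

theorem resRow_minor_zero_add_two (n k : ℕ) (hk : k + 2 < n + 2) :
    resRow1 n 0 * resRow2 n ⟨k + 2, hk⟩ - resRow1 n ⟨k + 2, hk⟩ * resRow2 n 0 =
      X 0 * X ⟨k + 5, by omega⟩ - X 1 * X ⟨k + 4, by omega⟩ := by
  simp [resRow1, resRow2, mul_comm]

theorem stmt10 (n : ℕ) :
    (X 1 : MvPolynomial (Fin (n + 5)) ℂ) ^ n * X 4 -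
        X 0 ^ n * X ⟨n + 4, by omega⟩ ∈
      Ideal.span {m | ∃ i j : Fin (n + 2),
        m = resRow1 n i * resRow2 n j - resRow1 n j * resRow2 n i} := by
  set I := Ideal.span {m | ∃ i j : Fin (n + 2),
    m = resRow1 n i * resRow2 n j - resRow1 n j * resRow2 n i}
  -- `y k` is the paper's `X_{k+3}` (padded by `0` past `k = n`), so the minors of columns
  -- `0, k+2` say `α₀ y (k+1) ≡ α₁ y k`; chaining them gives `α₁^n y 0 ≡ α₀^n y n`.
  let y : ℕ → MvPolynomial (Fin (n + 5)) ℂ := fun k => if h : k + 4 < n + 5 then X ⟨k + 4, h⟩ else 0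
  let π := Ideal.Quotient.mk I
  have hy : ∀ k < n, π (X 0) * π (y (k + 1)) = π (X 1) * π (y k) := by
    intro k hk
    rw [← map_mul, ← map_mul]
    refine Ideal.Quotient.eq.mpr (Ideal.subset_span ⟨0, ⟨k + 2, by omega⟩, ?_⟩)
    simp only [resRow_minor_zero_add_two, y, dif_pos (show k + 1 + 4 < n + 5 by omega),
      dif_pos (show k + 4 < n + 5 by omega)]
  have key := pow_mul_eq_pow_mul_of_forall_lt (y := fun k => π (y k)) hy
  simp only [← map_pow, ← map_mul, y, dif_pos (show n + 4 < n + 5 by omega)] at key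
  exact Ideal.Quotient.eq.mp key
end

section
/- Fix an integer n ≥ 1. The polynomial xz − y^2 − y t^n is prime in C[x,y,z,t], so R = C[x,y,z,t]/(xz − y(y+t^n)) is an integral domain; let K be its field of fractions. Then the three elements x, z/y, t of K are algebraically independent over C, and the C-subalgebra of K generated by x, y, z, t, and z/y is equal to the polynomial subalgebra C[x, z/y, t]; in particular y = x·(z/y) − t^n and z = (z/y)·(x·(z/y) − t^n) in K. -/
open MvPolynomial

/-!
Write `u = z/y`. The substitution `x ↦ x, y ↦ xu − tⁿ, z ↦ u(xu − tⁿ), t ↦ t` into `ℂ[x,u,t]`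
kills `xz − y(y + tⁿ)`, and its kernel is exactly the ideal generated by that polynomial. Indeed,
as a polynomial in `y` over `ℂ[x,z,t]` the relation is, up to sign, the monic quadratic
`y² + tⁿy − xz`; after division by it, it remains to see that `a + b·(xu − tⁿ) = 0` with
`a, b ∈ ℂ[x,z,t]` forces `a = b = 0`. At a complex point `(x,z,t)` with `x ≠ 0` each root `y` of
the quadratic is the value of `xu − tⁿ` at `u = (y + tⁿ)/x`, so `a + b·y` vanishes at both roots,
and two distinct roots give `a = b = 0` there.

Hence `R` embeds into `ℂ[x,u,t]`, so the relation is prime, and `K` embeds into `ℂ(x,u,t)`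
sending `x, z/y, t` to the variables `x, u, t`. The remaining claims are identities in `K`.
-/

theorem MvPolynomial.eq_zero_of_eval_eq_zero_off_zeros {R σ : Type*} [CommRing R] [IsDomain R]
    [Infinite R] {p q : MvPolynomial σ R} (hq : q ≠ 0)
    (h : ∀ w, eval w q ≠ 0 → eval w p = 0) : p = 0 := by
  have hpq : p * q = 0 := MvPolynomial.funext fun w => by
    by_cases hw : eval w q = 0 <;> simp [hw, h]
  exact (mul_eq_zero.mp hpq).resolve_right hq

theorem Polynomial.ker_eval₂RingHom_eq_span_of_monic {R S : Type*} [CommRing R] [Nontrivial R]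
    [CommRing S] (g : R →+* S) (s : S) {F : Polynomial R} (hF : F.Monic)
    (hFs : F.eval₂ g s = 0)
    (hinj : ∀ r : Polynomial R, r.degree < F.degree → r.eval₂ g s = 0 → r = 0) :
    RingHom.ker (eval₂RingHom g s) = Ideal.span {F} := by
  ext p
  rw [RingHom.mem_ker, Ideal.mem_span_singleton, ← modByMonic_eq_zero_iff_dvd hF]
  have hdiv := congrArg (eval₂ g s) (modByMonic_add_div p F)
  rw [eval₂_add, eval₂_mul, hFs, zero_mul, add_zero] at hdiv
  constructor
  · exact fun hp => hinj _ (degree_modByMonic_lt p hF) (hdiv.trans hp)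
  · intro hp
    rw [coe_eval₂RingHom, ← hdiv, hp, eval₂_zero]

theorem Algebra.adjoin_eq_of_eq_mul_sub_pow {R A : Type*} [CommRing R] [CommRing A]
    [Algebra R A] (n : ℕ) {x y z t w : A} (hy : y = x * w - t ^ n) (hz : z = w * y) :
    adjoin R {x, y, z, t, w} = adjoin R {x, w, t} := by
  refine le_antisymm ?_ (adjoin_mono (by intro; simp; tauto))
  have hx : x ∈ adjoin R {x, w, t} := subset_adjoin (by simp)
  have hw : w ∈ adjoin R {x, w, t} := subset_adjoin (by simp)
  have ht : t ∈ adjoin R {x, w, t} := subset_adjoin (by simp)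
  have hy' : y ∈ adjoin R {x, w, t} := hy ▸ sub_mem (mul_mem hx hw) (pow_mem ht n)
  rw [adjoin_le_iff, Set.insert_subset_iff, Set.insert_subset_iff, Set.insert_subset_iff,
    Set.insert_subset_iff, Set.singleton_subset_iff]
  exact ⟨hx, hy', hz ▸ mul_mem hw hy', ht, hw⟩

theorem eq_mul_div_sub_of_mul_sub_sq_sub_mul_eq_zero {F : Type*} [Field F] {x y z s : F}
    (hy : y ≠ 0) (h : x * z - y ^ 2 - y * s = 0) : y = x * (z / y) - s := by
  rw [eq_sub_iff_add_eq, mul_div_assoc', eq_div_iff hy]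
  linear_combination -h

noncomputable section

namespace Flop

variable (n : ℕ)

/-- The image `xu − tⁿ` of `y`, in `ℂ[x,u,t]` with `x, u, t = X 0, X 1, X 2` and `u = z/y`. -/
def yImage : MvPolynomial (Fin 3) ℂ := X 0 * X 1 - X 2 ^ n

theorem yImage_ne_zero : yImage n ≠ 0 := fun h => by
  have := congrArg (eval ![0, 0, 1]) h
  simp [yImage] at this

/-- The substitution `ℂ[x,z,t] → ℂ[x,u,t]`, `z ↦ u(xu − tⁿ)`, where `x, z, t = X 0, X 1, X 2`. -/
def zSubst : MvPolynomial (Fin 3) ℂ →ₐ[ℂ] MvPolynomial (Fin 3) ℂ :=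
  aeval ![X 0, X 1 * yImage n, X 2]

theorem eval_zSubst (w : Fin 3 → ℂ) (p : MvPolynomial (Fin 3) ℂ) :
    eval w (zSubst n p) = eval ![w 0, w 1 * (w 0 * w 1 - w 2 ^ n), w 2] p := by
  rw [zSubst, aeval_eq_bind₁, eval, eval₂Hom_bind₁, eval]
  congr 2
  funext i
  fin_cases i <;> simp [yImage]

variable {n} in
theorem eval_add_mul_eq_zero_of_root {a b : MvPolynomial (Fin 3) ℂ}
    (h : zSubst n a + zSubst n b * yImage n = 0) {x z t y : ℂ} (hx : x ≠ 0)
    (hy : y * (y + t ^ n) = x * z) :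
    eval ![x, z, t] a + eval ![x, z, t] b * y = 0 := by
  have hu : x * ((y + t ^ n) / x) - t ^ n = y := by field_simp; ring
  have hz : (y + t ^ n) / x * y = z := by field_simp; linear_combination hy
  simpa [eval_zSubst, hu, hz, yImage] using congrArg (eval ![x, (y + t ^ n) / x, t]) h

theorem eq_zero_of_zSubst_add_mul_yImage_eq_zero {a b : MvPolynomial (Fin 3) ℂ}
    (h : zSubst n a + zSubst n b * yImage n = 0) : a = 0 ∧ b = 0 := by
  -- `x` times the discriminant of `y² + tⁿy − xz`
  let q : MvPolynomial (Fin 3) ℂ := X 0 * ((X 2 ^ n) ^ 2 + 4 * X 0 * X 1)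
  have hq : q ≠ 0 := fun h0 => by
    have := congrArg (eval fun _ => (1 : ℂ)) h0
    norm_num [q] at this
  have generic : ∀ w, eval w q ≠ 0 → eval w a = 0 ∧ eval w b = 0 := by
    intro w hw
    have hw' : w = ![w 0, w 1, w 2] := by ext i; fin_cases i <;> rfl
    obtain ⟨hx, hdisc⟩ : w 0 ≠ 0 ∧ (w 2 ^ n) ^ 2 + 4 * w 0 * w 1 ≠ 0 := by
      simpa [q, not_or] using hw
    obtain ⟨r, hr⟩ := IsAlgClosed.exists_pow_nat_eq ((w 2 ^ n) ^ 2 + 4 * w 0 * w 1) two_pos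
    have hr0 : r ≠ 0 := by rintro rfl; exact hdisc (by simpa using hr.symm)
    have h₁ := eval_add_mul_eq_zero_of_root h (z := w 1) (t := w 2)
      (y := (-w 2 ^ n + r) / 2) hx (by linear_combination hr / 4)
    have h₂ := eval_add_mul_eq_zero_of_root h (z := w 1) (t := w 2)
      (y := (-w 2 ^ n - r) / 2) hx (by linear_combination hr / 4)
    rw [← hw'] at h₁ h₂
    have hb : eval w b = 0 :=
      (mul_eq_zero.mp (by linear_combination h₁ - h₂ : eval w b * r = 0)).resolve_right hr0
    exact ⟨by simpa [hb] using h₁, hb⟩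
  exact ⟨eq_zero_of_eval_eq_zero_off_zeros hq fun w hw => (generic w hw).1,
    eq_zero_of_eval_eq_zero_off_zeros hq fun w hw => (generic w hw).2⟩

def yQuadratic : Polynomial (MvPolynomial (Fin 3) ℂ) :=
  Polynomial.X ^ 2 + Polynomial.C (X 2 ^ n) * Polynomial.X - Polynomial.C (X 0 * X 1)

theorem yQuadratic_monic : (yQuadratic n).Monic := by
  unfold yQuadratic; monicity!

theorem yQuadratic_degree : (yQuadratic n).degree = 2 := by
  unfold yQuadratic; compute_degree!

theorem ker_aevalTower_zSubst :
    RingHom.ker (Polynomial.aevalTower (zSubst n) (yImage n)) = Ideal.span {yQuadratic n} := by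
  refine Polynomial.ker_eval₂RingHom_eq_span_of_monic _ _ (yQuadratic_monic n) ?_
    fun r hr hr0 => ?_
  · simp only [yQuadratic, Polynomial.eval₂_sub, Polynomial.eval₂_add, Polynomial.eval₂_mul,
      Polynomial.eval₂_pow, Polynomial.eval₂_X, Polynomial.eval₂_C, yImage, zSubst,
      aeval_eq_bind₁, RingHom.coe_coe, map_pow, map_mul, bind₁_X_right, Matrix.cons_val,
      Matrix.cons_val_zero, Matrix.cons_val_one]
    ring
  rw [yQuadratic_degree] at hr
  rw [Polynomial.eq_X_add_C_of_degree_le_one (Order.le_of_lt_succ hr)] at hr0 ⊢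
  obtain ⟨h0, h1⟩ := eq_zero_of_zSubst_add_mul_yImage_eq_zero n (a := r.coeff 0)
    (b := r.coeff 1) (by
      simp only [Polynomial.eval₂_add, Polynomial.eval₂_mul, Polynomial.eval₂_C, RingHom.coe_coe,
        Polynomial.eval₂_X] at hr0
      linear_combination hr0)
  simp [h0, h1]

/-- `ℂ[x,y,z,t] ≃ ℂ[x,z,t][y]`. -/
def yEquiv : MvPolynomial (Fin 4) ℂ ≃ₐ[ℂ] Polynomial (MvPolynomial (Fin 3) ℂ) :=
  (renameEquiv ℂ (Equiv.swap 0 1)).trans (finSuccEquiv ℂ 3)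

theorem yEquiv_X (i : Fin 4) :
    yEquiv (X i) =
      ![Polynomial.C (X 0), Polynomial.X, Polynomial.C (X 1), Polynomial.C (X 2)] i := by
  fin_cases i <;> simp only [yEquiv, AlgEquiv.trans_apply, renameEquiv_apply, rename_X]
  · exact finSuccEquiv_X_succ (j := 0)
  · exact finSuccEquiv_X_zero
  · exact finSuccEquiv_X_succ (j := 1)
  · exact finSuccEquiv_X_succ (j := 2)

theorem yEquiv_relation :
    yEquiv (X 0 * X 2 - X 1 ^ 2 - X 1 * X 3 ^ n) = -yQuadratic n := by
  simp only [map_sub, map_mul, map_pow, yEquiv_X, Matrix.cons_val_zero, Matrix.cons_val,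
    Matrix.cons_val_one, yQuadratic]
  ring

def param : MvPolynomial (Fin 4) ℂ →ₐ[ℂ] MvPolynomial (Fin 3) ℂ :=
  aeval ![X 0, yImage n, X 1 * yImage n, X 2]

theorem param_eq_aevalTower_comp_yEquiv :
    param n = (Polynomial.aevalTower (zSubst n) (yImage n)).comp yEquiv.toAlgHom := by
  apply MvPolynomial.algHom_ext
  intro i
  fin_cases i <;> simp [param, yEquiv_X, zSubst]

theorem ker_param :
    RingHom.ker (param n) = Ideal.span {X 0 * X 2 - X 1 ^ 2 - X 1 * X 3 ^ n} := by
  ext p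
  rw [param_eq_aevalTower_comp_yEquiv, ← AlgHom.comap_ker, ker_aevalTower_zSubst,
    Ideal.mem_comap, Ideal.mem_span_singleton, Ideal.mem_span_singleton, ← neg_dvd,
    ← yEquiv_relation]
  exact map_dvd_iff yEquiv

theorem relation_prime :
    Prime (X 0 * X 2 - X 1 ^ 2 - X 1 * X 3 ^ n : MvPolynomial (Fin 4) ℂ) := by
  have hne : (X 0 * X 2 - X 1 ^ 2 - X 1 * X 3 ^ n : MvPolynomial (Fin 4) ℂ) ≠ 0 := fun h => by
    have := congrArg (eval ![1, 0, 1, 0]) h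
    simp at this
  rw [← Ideal.span_singleton_prime hne, ← ker_param]
  exact RingHom.ker_isPrime _

def embed : flopBase n →ₐ[ℂ] MvPolynomial (Fin 3) ℂ :=
  Ideal.Quotient.liftₐ _ (param n) fun a ha => by rwa [← ker_param] at ha

theorem embed_injective : Function.Injective (embed n) :=
  (Ideal.injective_lift_iff _).2 (ker_param n)

theorem exists_fractionRing_algHom [IsDomain (flopBase n)] :
    ∃ ι : FractionRing (flopBase n) →ₐ[ℂ] FractionRing (MvPolynomial (Fin 3) ℂ),
      ∀ p, ι (algebraMap _ _ (Ideal.Quotient.mk _ p : flopBase n)) =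
        algebraMap _ _ (param n p) := by
  have hinj : Function.Injective
      ((IsScalarTower.toAlgHom ℂ _ (FractionRing (MvPolynomial (Fin 3) ℂ))).comp (embed n)) :=
    (IsFractionRing.injective _ _).comp (embed_injective n)
  exact ⟨IsFractionRing.liftAlgHom hinj, fun p => IsFractionRing.lift_algebraMap hinj _⟩

end Flop

end

theorem stmt17_general (n : ℕ) :
    -- the defining polynomial is prime, so `R` is an integral domain …
    Prime (X 0 * X 2 - X 1 ^ 2 - X 1 * X 3 ^ n : MvPolynomial (Fin 4) ℂ) ∧
    IsDomain (flopBase n) ∧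
    -- … and, letting `K` be its field of fractions:
    ∀ [IsDomain (flopBase n)],
      (let K := FractionRing (flopBase n)
       let xK := algebraMap (flopBase n) K (Ideal.Quotient.mk _ (X 0))
       let yK := algebraMap (flopBase n) K (Ideal.Quotient.mk _ (X 1))
       let zK := algebraMap (flopBase n) K (Ideal.Quotient.mk _ (X 2))
       let tK := algebraMap (flopBase n) K (Ideal.Quotient.mk _ (X 3))
       -- `x, z/y, t` are algebraically independent over `ℂ`
       AlgebraicIndependent ℂ ![xK, zK / yK, tK] ∧
       -- `ℂ[x, y, z, t, z/y] = ℂ[x, z/y, t]` inside `K`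
       Algebra.adjoin ℂ {xK, yK, zK, tK, zK / yK} =
         Algebra.adjoin ℂ {xK, zK / yK, tK} ∧
       -- `y = x·(z/y) − t^n` and `z = (z/y)·(x·(z/y) − t^n)` in `K`
       yK = xK * (zK / yK) - tK ^ n ∧
       zK = (zK / yK) * (xK * (zK / yK) - tK ^ n)) := by
  refine ⟨Flop.relation_prime n, (Flop.embed_injective n).isDomain, fun {_} => ?_⟩
  intro K xK yK zK tK
  obtain ⟨ι, hι⟩ := Flop.exists_fractionRing_algHom n
  have hyι : ι yK = algebraMap _ _ (Flop.yImage n) := by simpa [Flop.param] using hι (X 1)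
  have hy0 : yK ≠ 0 := fun h => Flop.yImage_ne_zero n <| IsFractionRing.injective _
    (FractionRing (MvPolynomial (Fin 3) ℂ)) <| by rw [← hyι, h, map_zero, map_zero]
  have hrel : xK * zK - yK ^ 2 - yK * tK ^ n = 0 := by
    simpa only [map_sub, map_mul, map_pow, map_zero] using
      congrArg (algebraMap (flopBase n) K) (Ideal.Quotient.mk_singleton_self _)
  have hyK := eq_mul_div_sub_of_mul_sub_sq_sub_mul_eq_zero hy0 hrel
  have hzK : zK = zK / yK * yK := (div_mul_cancel₀ zK hy0).symm
  refine ⟨?_, Algebra.adjoin_eq_of_eq_mul_sub_pow n hyK hzK, hyK, hyK ▸ hzK⟩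
  refine AlgebraicIndependent.of_comp ι ?_
  convert (algebraicIndependent_X (Fin 3) ℂ).map'
    (f := IsScalarTower.toAlgHom ℂ _ (FractionRing (MvPolynomial (Fin 3) ℂ)))
    (IsFractionRing.injective _ _)
  ext i
  fin_cases i
  · simpa [Flop.param] using hι (X 0)
  · have hzι : ι zK = algebraMap _ _ (X 1 * Flop.yImage n) := by
      simpa [Flop.param] using hι (X 2)
    show ι (zK / yK) = algebraMap _ _ (X 1)
    rw [map_div₀, hzι, hyι, map_mul, mul_div_cancel_right₀ _ (hyι ▸ (map_ne_zero ι).2 hy0)]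
  · simpa [Flop.param] using hι (X 3)

theorem stmt17 (n : ℕ) (hn : 1 ≤ n) :
    -- the defining polynomial is prime, so `R` is an integral domain …
    Prime (X 0 * X 2 - X 1 ^ 2 - X 1 * X 3 ^ n : MvPolynomial (Fin 4) ℂ) ∧
    IsDomain (flopBase n) ∧
    -- … and, letting `K` be its field of fractions:
    ∀ [IsDomain (flopBase n)],
      (let K := FractionRing (flopBase n)
       let xK := algebraMap (flopBase n) K (Ideal.Quotient.mk _ (X 0))
       let yK := algebraMap (flopBase n) K (Ideal.Quotient.mk _ (X 1))
       let zK := algebraMap (flopBase n) K (Ideal.Quotient.mk _ (X 2))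
       let tK := algebraMap (flopBase n) K (Ideal.Quotient.mk _ (X 3))
       -- `x, z/y, t` are algebraically independent over `ℂ`
       AlgebraicIndependent ℂ ![xK, zK / yK, tK] ∧
       -- `ℂ[x, y, z, t, z/y] = ℂ[x, z/y, t]` inside `K`
       Algebra.adjoin ℂ {xK, yK, zK, tK, zK / yK} =
         Algebra.adjoin ℂ {xK, zK / yK, tK} ∧
       -- `y = x·(z/y) − t^n` and `z = (z/y)·(x·(z/y) − t^n)` in `K`
       yK = xK * (zK / yK) - tK ^ n ∧
       zK = (zK / yK) * (xK * (zK / yK) - tK ^ n)) :=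
  stmt17_general n
end
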